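/- Let v_1,...,v_n ∈ ℝ^r with 0 in the interior of their convex hull, c_1,...,c_n ∈ ℝ, τ = min { c : (c,0) ∈ convexHull {(c_i,v_i)} }, and F the minimal face of convexHull {(c_i,v_i)} containing (τ, 0). For d ∈ ℝ^r define δ_i(d) = c_i + ⟨v_i,d⟩ − min_j (c_j + ⟨v_j,d⟩). Then the following are equivalent: (1) 0 lies in the relative interior of convexHull { v_i : δ_i(d) = 0 }; (2) the lowest face of convexHull {(c_i,v_i)} with respect to (1,d) equals F. -/

import Mathlib

/-!
Write `p i = (c i, v i)`, `φ = ⟨(1, d), ·⟩` and `m = min φ (p i)`. A convex combination of the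
`p i` lies on the lowest face `G` of `φ` iff it only uses minimizers of `φ ∘ p`, so condition (1)
says that `(m, 0)` is a convex combination of the vertices of `G` with all weights positive; then
`m = τ`. Every face containing such a point contains all of `G`, hence `G ⊆ F`, and `F ⊆ G` by
minimality.

Conversely, if `G = F`, choose a nonnegative linear relation among the vectors `p i - (τ, 0)`
with maximal support. A Gordan-type separation (Hahn–Banach between the convex hull of the unused
vectors and the span of the used ones) produces a functional whose lowest face contains `(τ, 0)`
but no unused `p i`. By minimality this face contains `F = G`, so every vertex of `G` is used,
and the normalized relation is the required weight vector.
-/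

/-- A face of a convex set `Δ`, in the sense of an argmin set of a linear functional. -/
def IsFace {V : Type*} [AddCommGroup V] [Module ℝ V] (Δ F : Set V) : Prop :=
  ∃ φ : V →ₗ[ℝ] ℝ, F = {w ∈ Δ | ∀ u ∈ Δ, φ w ≤ φ u}

open Finset Filter Topology

theorem exists_pos_forall_nonneg_add_mul {ι : Type*} [Fintype ι] {w ν : ι → ℝ}
    (hw : ∀ i, 0 ≤ w i) (hν : ∀ i, w i = 0 → 0 ≤ ν i) : ∃ ε > 0, ∀ i, 0 ≤ w i + ε * ν i := by
  have h : ∀ i, ∀ᶠ ε in 𝓝[>] (0 : ℝ), 0 ≤ w i + ε * ν i := by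
    intro i
    rcases (hw i).eq_or_lt with hwi | hwi
    · filter_upwards [self_mem_nhdsWithin] with ε hε
      rw [← hwi, zero_add]
      exact mul_nonneg (le_of_lt hε) (hν i hwi.symm)
    · have hlim : Tendsto (fun ε => w i + ε * ν i) (𝓝 0) (𝓝 (w i)) := by
        simpa using tendsto_const_nhds.add ((tendsto_id (x := 𝓝 (0 : ℝ))).mul_const (ν i))
      exact (hlim.eventually (eventually_ge_nhds hwi)).filter_mono nhdsWithin_le_nhds
  obtain ⟨ε, hε, hpos⟩ := ((eventually_all.2 h).and self_mem_nhdsWithin).exists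
  exact ⟨ε, hpos, hε⟩

section ConvexCombinations

variable {ι E : Type*} [AddCommGroup E] [Module ℝ E]

theorem le_of_mem_convexHull_range (φ : E →ₗ[ℝ] ℝ) {p : ι → E} {b : ℝ}
    (h : ∀ i, b ≤ φ (p i)) {u : E} (hu : u ∈ convexHull ℝ (Set.range p)) : b ≤ φ u :=
  (convexHull_min (Set.range_subset_iff.2 h) (convex_halfSpace_ge φ.isLinear b) :
    convexHull ℝ (Set.range p) ⊆ {u | b ≤ φ u}) hu

theorem apply_eq_zero_of_forall_lt_apply (f : E →ₗ[ℝ] ℝ) {L : Submodule ℝ E} {v : ℝ}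
    (hf : ∀ l ∈ L, v < f l) {l : E} (hl : l ∈ L) : f l = 0 := by
  by_contra hne
  have := hf ((v / f l) • l) (L.smul_mem _ hl)
  rw [map_smul, smul_eq_mul, div_mul_cancel₀ _ hne] at this
  exact lt_irrefl v this

variable [Fintype ι]

theorem mem_convexHull_range_iff_exists_weights (p : ι → E) {x : E} :
    x ∈ convexHull ℝ (Set.range p) ↔
      ∃ w : ι → ℝ, (∀ i, 0 ≤ w i) ∧ ∑ i, w i = 1 ∧ ∑ i, w i • p i = x := by
  classical
  have hp : Set.range p = Fintype.linearCombination ℝ p '' Set.range fun i => Pi.single i 1 := by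
    rw [← Set.range_comp]
    congr 1
    ext i
    simp [Fintype.linearCombination_apply, Pi.single_apply]
  rw [hp, ← LinearMap.image_convexHull, convexHull_rangle_single_eq_stdSimplex]
  simp [stdSimplex, Fintype.linearCombination_apply, and_assoc]

theorem apply_sum_eq_of_forall_ne_zero (φ : E →ₗ[ℝ] ℝ) {p : ι → E} {w : ι → ℝ} {b : ℝ}
    (hw1 : ∑ i, w i = 1) (h : ∀ i, w i ≠ 0 → φ (p i) = b) : φ (∑ i, w i • p i) = b := by
  simp only [map_sum, map_smul, smul_eq_mul]
  rw [sum_congr rfl fun i _ => ?_, ← sum_mul, hw1, one_mul]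
  by_cases hi : w i = 0
  · simp [hi]
  · rw [h i hi]

theorem apply_eq_of_apply_sum_eq (φ : E →ₗ[ℝ] ℝ) {p : ι → E} {w : ι → ℝ} {b : ℝ}
    (hw : ∀ i, 0 ≤ w i) (hw1 : ∑ i, w i = 1) (hb : ∀ i, b ≤ φ (p i))
    (hsum : φ (∑ i, w i • p i) = b) {i : ι} (hi : w i ≠ 0) : φ (p i) = b := by
  have hzero : ∑ j, w j * (φ (p j) - b) = 0 := by
    simp only [mul_sub, sum_sub_distrib, ← sum_mul, hw1, one_mul, sub_eq_zero]
    simpa [map_sum] using hsum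
  have := (sum_eq_zero_iff_of_nonneg fun j _ => mul_nonneg (hw j) (sub_nonneg.2 (hb j))).1
    hzero i (mem_univ i)
  exact sub_eq_zero.1 ((mul_eq_zero.1 this).resolve_left hi)

end ConvexCombinations

section NonnegRelations

variable {ι E : Type*} [Fintype ι] [AddCommGroup E] [Module ℝ E]

def IsNonnegRelation (q : ι → E) (w : ι → ℝ) : Prop :=
  (∀ i, 0 ≤ w i) ∧ ∑ i, w i • q i = 0

theorem exists_isNonnegRelation_maximal (q : ι → E) :
    ∃ w, IsNonnegRelation q w ∧ ∀ ν, IsNonnegRelation q ν → ∀ i, 0 < ν i → 0 < w i := by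
  classical
  have h : ∀ i, ∃ ν, IsNonnegRelation q ν ∧
      ((∃ μ, IsNonnegRelation q μ ∧ 0 < μ i) → 0 < ν i) := by
    intro i
    by_cases hi : ∃ μ, IsNonnegRelation q μ ∧ 0 < μ i
    · obtain ⟨μ, hμ, hμi⟩ := hi
      exact ⟨μ, hμ, fun _ => hμi⟩
    · exact ⟨0, ⟨fun _ => le_rfl, by simp⟩, fun h' => absurd h' hi⟩
  choose ν hν hpos using h
  refine ⟨∑ i, ν i, ⟨fun j => ?_, ?_⟩, fun μ hμ j hj => ?_⟩
  · rw [Finset.sum_apply]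
    exact sum_nonneg fun i _ => (hν i).1 j
  · simp only [Finset.sum_apply, sum_smul]
    rw [sum_comm]
    exact sum_eq_zero fun i _ => (hν i).2
  · rw [Finset.sum_apply]
    exact (hpos j ⟨μ, hμ, hj⟩).trans_le (single_le_sum (fun i _ => (hν i).1 j) (mem_univ j))

theorem sum_div_smul_eq_of_isNonnegRelation {p : ι → E} {x : E} {w : ι → ℝ}
    (hw : IsNonnegRelation (fun i => p i - x) w) (hs : ∑ i, w i ≠ 0) :
    ∑ i, (w i / ∑ j, w j) • p i = x := by
  have h : ∑ i, w i • p i = (∑ i, w i) • x := by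
    simpa only [smul_sub, sum_sub_distrib, ← sum_smul, sub_eq_zero] using hw.2
  simp only [div_eq_inv_mul, mul_smul]
  rw [← smul_sum, h, smul_smul, inv_mul_cancel₀ hs, one_smul]

/-- A convex combination of the vectors unused by a maximal nonnegative relation is never a
linear combination of the used ones: their difference is a linear relation, and adding it to a
large multiple of the maximal one would give a nonnegative relation with larger support. -/
theorem sum_smul_notMem_span_of_isNonnegRelation_maximal {q : ι → E} {w : ι → ℝ}
    (hw : IsNonnegRelation q w) (hmax : ∀ ν, IsNonnegRelation q ν → ∀ i, 0 < ν i → 0 < w i)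
    {μ : ι → ℝ} (hμ : μ ∈ stdSimplex ℝ ι) (hμw : ∀ i, w i ≠ 0 → μ i = 0) :
    ∑ i, μ i • q i ∉ Submodule.span ℝ (Set.range fun i => w i • q i) := by
  intro hμL
  obtain ⟨c, hc⟩ := (Submodule.mem_span_range_iff_exists_fun ℝ).1 hμL
  obtain ⟨ε, hε, hνpos⟩ := exists_pos_forall_nonneg_add_mul hw.1
    (ν := fun i => μ i - c i * w i) fun i hi => by simp [hi, hμ.1 i]
  obtain ⟨k, -, hk⟩ := exists_lt_of_sum_lt (s := univ) (f := fun _ => (0 : ℝ)) (g := μ)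
    (by simp [hμ.2])
  have hwk : w k = 0 := by_contra fun h => hk.ne' (hμw k h)
  have hrel : IsNonnegRelation q fun i => w i + ε * (μ i - c i * w i) := by
    refine ⟨hνpos, ?_⟩
    simp only [add_smul, mul_smul, sub_smul, sum_add_distrib, ← smul_sum, sum_sub_distrib, hw.2]
    simp [hc]
  exact (hmax _ hrel k (by simpa [hwk] using mul_pos hε hk)).ne' hwk

variable [TopologicalSpace E] [IsTopologicalAddGroup E] [ContinuousSMul ℝ E]
  [LocallyConvexSpace ℝ E] [T2Space E]

theorem exists_dual_pos_of_isNonnegRelation_maximal {q : ι → E} {w : ι → ℝ}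
    (hw : IsNonnegRelation q w) (hmax : ∀ ν, IsNonnegRelation q ν → ∀ i, 0 < ν i → 0 < w i) :
    ∃ f : StrongDual ℝ E, ∀ i, 0 ≤ f (q i) ∧ (w i = 0 → 0 < f (q i)) := by
  classical
  set L := Submodule.span ℝ (Set.range fun i => w i • q i)
  set Z : Set (ι → ℝ) := stdSimplex ℝ ι ∩ {μ | ∀ i, w i ≠ 0 → μ i = 0}
  set T := Fintype.linearCombination ℝ q
  have hZ_convex : Convex ℝ Z := by
    refine (convex_stdSimplex ℝ ι).inter fun μ hμ μ' hμ' a b _ _ _ i hi => ?_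
    simp [hμ i hi, hμ' i hi]
  have hZ_compact : IsCompact Z := by
    refine (isCompact_stdSimplex ℝ ι).inter_right ?_
    simp only [Set.ofPred_forall]
    exact isClosed_iInter fun i => isClosed_iInter fun _ =>
      isClosed_eq (continuous_apply i) continuous_const
  have hL_closed : IsClosed (L : Set E) :=
    haveI := FiniteDimensional.span_of_finite ℝ (Set.finite_range fun i => w i • q i)
    L.closed_of_finiteDimensional
  have hdisj : Disjoint (T '' Z) L := by
    rw [Set.disjoint_left]
    rintro _ ⟨μ, ⟨hμ, hμw⟩, rfl⟩
    rw [Fintype.linearCombination_apply]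
    exact sum_smul_notMem_span_of_isNonnegRelation_maximal hw hmax hμ hμw
  obtain ⟨f, u, v, hfZ, huv, hfL⟩ := geometric_hahn_banach_compact_closed
    (hZ_convex.linear_image T) (hZ_compact.image T.continuous_of_finiteDimensional)
    L.convex hL_closed hdisj
  have hv : v < 0 := by simpa using hfL 0 L.zero_mem
  refine ⟨-f, fun i => ?_⟩
  by_cases hwi : w i = 0
  · have hqi : q i ∈ T '' Z := by
      refine ⟨Pi.single i 1, ⟨single_mem_stdSimplex ℝ i, fun j hj => ?_⟩, ?_⟩
      · simp [show j ≠ i from fun h => hj (h ▸ hwi)]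
      · simp [T, Fintype.linearCombination_apply, Pi.single_apply]
    have := hfZ _ hqi
    simp only [neg_apply, neg_nonneg, neg_pos, hwi, forall_const]
    constructor <;> linarith
  · have := apply_eq_zero_of_forall_lt_apply (f : E →ₗ[ℝ] ℝ) (L := L) hfL
      (Submodule.subset_span ⟨i, rfl⟩)
    rw [map_smul, smul_eq_mul, ContinuousLinearMap.coe_coe] at this
    simp [(mul_eq_zero.1 this).resolve_left hwi, hwi]

end NonnegRelations

section Faces

variable {V : Type*} [AddCommGroup V] [Module ℝ V]

def lowestFace (Δ : Set V) (φ : V →ₗ[ℝ] ℝ) : Set V :=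
  {w ∈ Δ | ∀ u ∈ Δ, φ w ≤ φ u}

theorem isFace_lowestFace (Δ : Set V) (φ : V →ₗ[ℝ] ℝ) : IsFace Δ (lowestFace Δ φ) :=
  ⟨φ, rfl⟩

variable {ι : Type*} {p : ι → V} {φ : V →ₗ[ℝ] ℝ}

theorem mem_lowestFace_convexHull_iff {x : V} :
    x ∈ lowestFace (convexHull ℝ (Set.range p)) φ ↔
      x ∈ convexHull ℝ (Set.range p) ∧ ∀ i, φ x ≤ φ (p i) :=
  ⟨fun h => ⟨h.1, fun i => h.2 _ (subset_convexHull ℝ _ ⟨i, rfl⟩)⟩,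
    fun h => ⟨h.1, fun _ hu => le_of_mem_convexHull_range φ h.2 hu⟩⟩

variable [Fintype ι] (hι : (univ : Finset ι).Nonempty)

theorem mem_lowestFace_convexHull_iff_eq_inf' {x : V} :
    x ∈ lowestFace (convexHull ℝ (Set.range p)) φ ↔
      x ∈ convexHull ℝ (Set.range p) ∧ φ x = univ.inf' hι (fun i => φ (p i)) := by
  rw [mem_lowestFace_convexHull_iff]
  refine and_congr_right fun hx =>
    ⟨fun h => le_antisymm ?_ ?_, fun h i => h ▸ inf'_le _ (mem_univ i)⟩
  · obtain ⟨i, -, hi⟩ := exists_mem_eq_inf' hι (fun i => φ (p i))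
    exact hi ▸ h i
  · exact le_of_mem_convexHull_range φ (fun i => inf'_le _ (mem_univ i)) hx

def PosExactlyOnArgmin (f w : ι → ℝ) : Prop :=
  ∀ i, (f i = univ.inf' hι f → 0 < w i) ∧ (f i ≠ univ.inf' hι f → w i = 0)

variable {hι}

theorem PosExactlyOnArgmin.nonneg {f w : ι → ℝ} (hw : PosExactlyOnArgmin hι f w) (i : ι) :
    0 ≤ w i := by
  by_cases hi : f i = univ.inf' hι f
  · exact ((hw i).1 hi).le
  · exact ((hw i).2 hi).ge

theorem sum_smul_mem_lowestFace {w : ι → ℝ} (hw : PosExactlyOnArgmin hι (fun i => φ (p i)) w)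
    (hw1 : ∑ i, w i = 1) : ∑ i, w i • p i ∈ lowestFace (convexHull ℝ (Set.range p)) φ :=
  (mem_lowestFace_convexHull_iff_eq_inf' hι).2
    ⟨(mem_convexHull_range_iff_exists_weights p).2 ⟨w, hw.nonneg, hw1, rfl⟩,
      apply_sum_eq_of_forall_ne_zero φ hw1 fun i hi => not_not.1 (mt (hw i).2 hi)⟩

theorem lowestFace_eq_of_posExactlyOnArgmin {x : V} {F : Set V}
    (hF : IsFace (convexHull ℝ (Set.range p)) F) (hxF : x ∈ F)
    (hFmin : ∀ F', IsFace (convexHull ℝ (Set.range p)) F' → x ∈ F' → F ⊆ F')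
    {w : ι → ℝ} (hw : PosExactlyOnArgmin hι (fun i => φ (p i)) w)
    (hw1 : ∑ i, w i = 1) (hwx : ∑ i, w i • p i = x) :
    lowestFace (convexHull ℝ (Set.range p)) φ = F := by
  have hxG := hwx ▸ sum_smul_mem_lowestFace hw hw1
  refine Set.Subset.antisymm ?_ (hFmin _ (isFace_lowestFace _ φ) hxG)
  obtain ⟨ψ, rfl⟩ := hF
  have hψx : ∀ i, ψ x ≤ ψ (p i) := (mem_lowestFace_convexHull_iff.1 hxF).2
  intro z hz
  obtain ⟨hzΔ, hφz⟩ := (mem_lowestFace_convexHull_iff_eq_inf' hι).1 hz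
  obtain ⟨t, ht0, ht1, rfl⟩ := (mem_convexHull_range_iff_exists_weights p).1 hzΔ
  refine mem_lowestFace_convexHull_iff.2 ⟨hzΔ, fun j => ?_⟩
  -- `z` only uses minimizers of `φ`, and `ψ` is constant on those since `x` uses all of them.
  rw [apply_sum_eq_of_forall_ne_zero ψ ht1 (b := ψ x) fun i hti => ?_]
  · exact hψx j
  · have hφi := apply_eq_of_apply_sum_eq φ ht0 ht1 (fun i => inf'_le _ (mem_univ i)) hφz hti
    exact apply_eq_of_apply_sum_eq ψ hw.nonneg hw1 hψx (by rw [hwx]) ((hw i).1 hφi).ne'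

variable [TopologicalSpace V] [IsTopologicalAddGroup V] [ContinuousSMul ℝ V]
  [LocallyConvexSpace ℝ V] [T2Space V]

theorem exists_posExactlyOnArgmin_of_lowestFace_eq {x : V} {F : Set V}
    (hxF : x ∈ F) (hFmin : ∀ F', IsFace (convexHull ℝ (Set.range p)) F' → x ∈ F' → F ⊆ F')
    (hGF : lowestFace (convexHull ℝ (Set.range p)) φ = F) :
    ∃ w : ι → ℝ, PosExactlyOnArgmin hι (fun i => φ (p i)) w ∧
      ∑ i, w i = 1 ∧ ∑ i, w i • p i = x := by
  subst hGF
  obtain ⟨hxΔ, hφx⟩ := (mem_lowestFace_convexHull_iff_eq_inf' hι).1 hxF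
  obtain ⟨w, hw, hmax⟩ := exists_isNonnegRelation_maximal fun i => p i - x
  obtain ⟨f, hf⟩ := exists_dual_pos_of_isNonnegRelation_maximal hw hmax
  have hxH : x ∈ lowestFace (convexHull ℝ (Set.range p)) f :=
    mem_lowestFace_convexHull_iff.2 ⟨hxΔ, fun i => by simpa using (hf i).1⟩
  have hpos : ∀ i, φ (p i) = univ.inf' hι (fun i => φ (p i)) → 0 < w i := by
    intro i hi
    have hpiH := hFmin _ (isFace_lowestFace _ f) hxH
      ((mem_lowestFace_convexHull_iff_eq_inf' hι).2 ⟨subset_convexHull ℝ _ ⟨i, rfl⟩, hi⟩)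
    refine (hw.1 i).lt_of_ne fun hwi => ?_
    have := hpiH.2 x hxΔ
    simp only [ContinuousLinearMap.coe_coe] at this
    linarith [(hf i).2 hwi.symm, map_sub f (p i) x]
  obtain ⟨i₀, -, hi₀⟩ := exists_mem_eq_inf' hι (fun i => φ (p i))
  have hs : 0 < ∑ i, w i :=
    (hpos i₀ hi₀.symm).trans_le (single_le_sum (fun i _ => hw.1 i) (mem_univ i₀))
  have hw'x := sum_div_smul_eq_of_isNonnegRelation hw hs.ne'
  have hw'1 : ∑ i, w i / ∑ j, w j = 1 := by rw [← sum_div, div_self hs.ne']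
  refine ⟨fun i => w i / ∑ j, w j, fun i => ⟨fun hi => div_pos (hpos i hi) hs, fun hi => ?_⟩,
    hw'1, hw'x⟩
  by_contra hne
  exact hi (apply_eq_of_apply_sum_eq φ (fun i => div_nonneg (hw.1 i) hs.le) hw'1
    (fun i => inf'_le _ (mem_univ i)) (hw'x ▸ hφx) hne)

end Faces

def heightFunctional {r : ℕ} (d : Fin r → ℝ) : ℝ × (Fin r → ℝ) →ₗ[ℝ] ℝ where
  toFun w := w.1 + ∑ j, w.2 j * d j
  map_add' x y := by
    simp only [Prod.fst_add, Prod.snd_add, Pi.add_apply, add_mul, sum_add_distrib]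
    ring
  map_smul' t x := by
    simp only [Prod.smul_fst, Prod.smul_snd, Pi.smul_apply, smul_eq_mul, RingHom.id_apply,
      mul_add, mul_sum, mul_assoc]

theorem eq_of_isLeast_of_mk_zero_mem_lowestFace {r : ℕ} {d : Fin r → ℝ}
    {Δ : Set (ℝ × (Fin r → ℝ))} {τ s : ℝ} (hτ : IsLeast {t | (t, 0) ∈ Δ} τ)
    (hs : (s, 0) ∈ lowestFace Δ (heightFunctional d)) : s = τ :=
  le_antisymm (by simpa [heightFunctional] using hs.2 _ hτ.1) (hτ.2 hs.1)

theorem stmt_13_general (r n : ℕ) (hn : 0 < n) (v : Fin n → (Fin r → ℝ)) (c : Fin n → ℝ)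
    (τ : ℝ)
    (hτ : IsLeast {x : ℝ | ((x, (0 : Fin r → ℝ)) : ℝ × (Fin r → ℝ)) ∈
        convexHull ℝ (Set.range (fun i => ((c i, v i) : ℝ × (Fin r → ℝ))))} τ)
    (F : Set (ℝ × (Fin r → ℝ)))
    (hFface : IsFace (convexHull ℝ (Set.range (fun i => ((c i, v i) : ℝ × (Fin r → ℝ))))) F)
    (hFmem : ((τ, (0 : Fin r → ℝ)) : ℝ × (Fin r → ℝ)) ∈ F)
    (hFmin : ∀ F' : Set (ℝ × (Fin r → ℝ)),
      IsFace (convexHull ℝ (Set.range (fun i => ((c i, v i) : ℝ × (Fin r → ℝ))))) F' →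
      ((τ, (0 : Fin r → ℝ)) : ℝ × (Fin r → ℝ)) ∈ F' → F ⊆ F')
    (d : Fin r → ℝ) :
    (∃ w : Fin n → ℝ,
      (∀ i,
        ((c i + ∑ j, v i j * d j =
            Finset.univ.inf' ⟨⟨0, hn⟩, Finset.mem_univ _⟩
              (fun i' => c i' + ∑ j, v i' j * d j)) → 0 < w i) ∧
        ((c i + ∑ j, v i j * d j ≠
            Finset.univ.inf' ⟨⟨0, hn⟩, Finset.mem_univ _⟩
              (fun i' => c i' + ∑ j, v i' j * d j)) → w i = 0)) ∧
      (∑ i, w i) = 1 ∧ (∑ i, w i • v i) = 0) ↔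
    {w ∈ convexHull ℝ (Set.range (fun i => ((c i, v i) : ℝ × (Fin r → ℝ)))) |
      ∀ u ∈ convexHull ℝ (Set.range (fun i => ((c i, v i) : ℝ × (Fin r → ℝ)))),
        w.1 + ∑ j, w.2 j * d j ≤ u.1 + ∑ j, u.2 j * d j} = F := by
  set p : Fin n → ℝ × (Fin r → ℝ) := fun i => (c i, v i)
  have hι : (univ : Finset (Fin n)).Nonempty := ⟨⟨0, hn⟩, mem_univ _⟩
  change (∃ w, PosExactlyOnArgmin hι (fun i => heightFunctional d (p i)) w ∧
      ∑ i, w i = 1 ∧ ∑ i, w i • v i = 0) ↔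
    lowestFace (convexHull ℝ (Set.range p)) (heightFunctional d) = F
  constructor
  · rintro ⟨w, hw, hw1, hwv⟩
    obtain ⟨s, hwp⟩ : ∃ s, ∑ i, w i • p i = (s, 0) :=
      ⟨_, Prod.ext rfl (by simpa [p, Prod.snd_sum] using hwv)⟩
    have hG := hwp ▸ sum_smul_mem_lowestFace hw hw1
    rw [eq_of_isLeast_of_mk_zero_mem_lowestFace hτ hG] at hwp
    exact lowestFace_eq_of_posExactlyOnArgmin hFface hFmem hFmin hw hw1 hwp
  · intro hGF
    obtain ⟨w, hw, hw1, hwx⟩ := exists_posExactlyOnArgmin_of_lowestFace_eq hFmem hFmin hGF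
    exact ⟨w, hw, hw1, by simpa [p, Prod.snd_sum] using congrArg Prod.snd hwx⟩

/-- Lemma 4.10 (l:tropcritmax): the `ε = 0` tropical critical condition at `d` holds iff the
lowest face of the augmented Newton polytope w.r.t. `(1,d)` is the minimal face `F` containing
the lowest point `(τ,0)` above `0`. -/
theorem stmt_13 (r n : ℕ) (hn : 0 < n) (v : Fin n → (Fin r → ℝ)) (c : Fin n → ℝ)
    (h0 : (0 : Fin r → ℝ) ∈ interior (convexHull ℝ (Set.range v)))
    (τ : ℝ)
    (hτ : IsLeast {x : ℝ | ((x, (0 : Fin r → ℝ)) : ℝ × (Fin r → ℝ)) ∈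
        convexHull ℝ (Set.range (fun i => ((c i, v i) : ℝ × (Fin r → ℝ))))} τ)
    (F : Set (ℝ × (Fin r → ℝ)))
    (hFface : IsFace (convexHull ℝ (Set.range (fun i => ((c i, v i) : ℝ × (Fin r → ℝ))))) F)
    (hFmem : ((τ, (0 : Fin r → ℝ)) : ℝ × (Fin r → ℝ)) ∈ F)
    (hFmin : ∀ F' : Set (ℝ × (Fin r → ℝ)),
      IsFace (convexHull ℝ (Set.range (fun i => ((c i, v i) : ℝ × (Fin r → ℝ))))) F' →
      ((τ, (0 : Fin r → ℝ)) : ℝ × (Fin r → ℝ)) ∈ F' → F ⊆ F')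
    (d : Fin r → ℝ) :
    (∃ w : Fin n → ℝ,
      (∀ i,
        ((c i + ∑ j, v i j * d j =
            Finset.univ.inf' ⟨⟨0, hn⟩, Finset.mem_univ _⟩
              (fun i' => c i' + ∑ j, v i' j * d j)) → 0 < w i) ∧
        ((c i + ∑ j, v i j * d j ≠
            Finset.univ.inf' ⟨⟨0, hn⟩, Finset.mem_univ _⟩
              (fun i' => c i' + ∑ j, v i' j * d j)) → w i = 0)) ∧
      (∑ i, w i) = 1 ∧ (∑ i, w i • v i) = 0) ↔
    {w ∈ convexHull ℝ (Set.range (fun i => ((c i, v i) : ℝ × (Fin r → ℝ)))) |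
      ∀ u ∈ convexHull ℝ (Set.range (fun i => ((c i, v i) : ℝ × (Fin r → ℝ)))),
        w.1 + ∑ j, w.2 j * d j ≤ u.1 + ∑ j, u.2 j * d j} = F :=
  stmt_13_general r n hn v c τ hτ F hFface hFmem hFmin d
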